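/- Let n ≥ 1, let G : ℝⁿ → (n×n real symmetric matrices) be smooth with smooth inverse K = G⁻¹, and let ξ : ℝⁿ → ℝⁿ, τ : ℝⁿ → ℝ be smooth with £_ξ G = τ·G. Then the Lie derivative of the Christoffel symbols of G satisfies £_ξ Γ^κ_{μν} = (1/2) [ (∂τ/∂q^μ) δ^κ_ν + (∂τ/∂q^ν) δ^κ_μ − (Σ_ρ K^{κρ} ∂τ/∂q^ρ) G_{μν} ]. -/

import Mathlib

open scoped BigOperators

/-- Partial derivative `∂f/∂q^α` of a scalar function on `ℝⁿ`. -/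
noncomputable def pd {n : ℕ} (f : (Fin n → ℝ) → ℝ) (α : Fin n) (q : Fin n → ℝ) : ℝ :=
  fderiv ℝ f q (Pi.single α 1)

/-- Lie derivative `(£_ξ G)_{μν}`. -/
noncomputable def lieG {n : ℕ} (ξ : (Fin n → ℝ) → Fin n → ℝ)
    (G : (Fin n → ℝ) → Fin n → Fin n → ℝ) (q : Fin n → ℝ) (μ ν : Fin n) : ℝ :=
  ∑ α : Fin n, (ξ q α * pd (fun p => G p μ ν) α q
      + pd (fun p => ξ p α) μ q * G q α ν
      + pd (fun p => ξ p α) ν q * G q μ α)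

/-- Christoffel symbols `Γ^κ_{μν} = (1/2) Σ_ρ K^{κρ}(∂_μ G_{ρν} + ∂_ν G_{ρμ} − ∂_ρ G_{μν})`,
where `K = G⁻¹`. -/
noncomputable def christoffel {n : ℕ} (G K : (Fin n → ℝ) → Fin n → Fin n → ℝ)
    (q : Fin n → ℝ) (κ μ ν : Fin n) : ℝ :=
  (1 / 2) * ∑ ρ : Fin n, K q κ ρ *
    (pd (fun p => G p ρ ν) μ q + pd (fun p => G p ρ μ) ν q - pd (fun p => G p μ ν) ρ q)

/-- Lie derivative of the Christoffel symbols along `ξ`: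
`£_ξ Γ^κ_{μν} = Σ_ρ ξ^ρ ∂_ρ Γ^κ_{μν} − Σ_ρ (∂_ρ ξ^κ) Γ^ρ_{μν} + Σ_ρ (∂_μ ξ^ρ) Γ^κ_{ρν}
 + Σ_ρ (∂_ν ξ^ρ) Γ^κ_{μρ} + ∂²ξ^κ/∂q^μ∂q^ν`. -/
noncomputable def lieGamma {n : ℕ} (ξ : (Fin n → ℝ) → Fin n → ℝ)
    (Γ : (Fin n → ℝ) → Fin n → Fin n → Fin n → ℝ) (q : Fin n → ℝ) (κ μ ν : Fin n) : ℝ :=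
  (∑ ρ : Fin n, ξ q ρ * pd (fun p => Γ p κ μ ν) ρ q)
  - (∑ ρ : Fin n, pd (fun p => ξ p κ) ρ q * Γ q ρ μ ν)
  + (∑ ρ : Fin n, pd (fun p => ξ p ρ) μ q * Γ q κ ρ ν)
  + (∑ ρ : Fin n, pd (fun p => ξ p ρ) ν q * Γ q κ μ ρ)
  + pd (fun p => pd (fun r => ξ r κ) ν p) μ q

/-! Lower the free index with `G`. For `h = £_ξ G` and its Christoffel symbol of the first kind
`Γ₁(h)_{σμν} = ½ (∂_μ h_{σν} + ∂_ν h_{σμ} - ∂_σ h_{μν})`, the coordinate identity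
`G_{σκ} £_ξ Γ^κ_{μν} = Γ₁(h)_{σμν} - h_{σρ} Γ^ρ_{μν}` needs only the symmetry of `G` and of second
partial derivatives. For `h = τ G` the product rule gives
`Γ₁(τ G)_{σμν} = ½ (τ_{,μ} G_{σν} + τ_{,ν} G_{σμ} - τ_{,σ} G_{μν}) + τ Γ₁(G)_{σμν}`, and the last
term cancels against `τ G_{σρ} Γ^ρ_{μν}`. Raising the index with `K = G⁻¹` gives the claim. -/

section PartialDerivative

variable {n : ℕ} {f g : (Fin n → ℝ) → ℝ} {q : Fin n → ℝ}

lemma pd_add (hf : DifferentiableAt ℝ f q) (hg : DifferentiableAt ℝ g q) (α : Fin n) :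
    pd (fun p => f p + g p) α q = pd f α q + pd g α q := by
  simp [pd, fderiv_fun_add hf hg]

lemma pd_sub (hf : DifferentiableAt ℝ f q) (hg : DifferentiableAt ℝ g q) (α : Fin n) :
    pd (fun p => f p - g p) α q = pd f α q - pd g α q := by
  simp [pd, fderiv_fun_sub hf hg]

lemma pd_mul (hf : DifferentiableAt ℝ f q) (hg : DifferentiableAt ℝ g q) (α : Fin n) :
    pd (fun p => f p * g p) α q = pd f α q * g q + f q * pd g α q := by
  simp only [pd, fderiv_fun_mul hf hg, add_apply, smul_apply, smul_eq_mul]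
  ring

lemma pd_const_mul (hf : DifferentiableAt ℝ f q) (c : ℝ) (α : Fin n) :
    pd (fun p => c * f p) α q = c * pd f α q := by
  simp [pd, fderiv_const_mul hf]

lemma pd_sum {ι : Type*} {s : Finset ι} {f : ι → (Fin n → ℝ) → ℝ}
    (hf : ∀ i ∈ s, DifferentiableAt ℝ (f i) q) (α : Fin n) :
    pd (fun p => ∑ i ∈ s, f i p) α q = ∑ i ∈ s, pd (f i) α q := by
  simp [pd, fderiv_fun_sum hf]

lemma contDiff_pd {m k : WithTop ℕ∞} (hf : ContDiff ℝ k f) (hmk : m + 1 ≤ k) (α : Fin n) :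
    ContDiff ℝ m (pd f α) :=
  (hf.fderiv_right hmk).clm_apply contDiff_const

lemma pd_comm (hf : ContDiff ℝ 2 f) (α β : Fin n) :
    pd (pd f α) β q = pd (pd f β) α q := by
  have hsymm : IsSymmSndFDerivAt ℝ f q :=
    hf.contDiffAt.isSymmSndFDerivAt (by simp [minSmoothness_of_isRCLikeNormedField])
  have hdiff : DifferentiableAt ℝ (fderiv ℝ f) q :=
    (hf.fderiv_right (m := 1) le_rfl).differentiable one_ne_zero q
  have hswap (v w : Fin n → ℝ) : fderiv ℝ (fun p => fderiv ℝ f p v) q w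
      = fderiv ℝ (fderiv ℝ f) q w v := by
    simp [fderiv_clm_apply hdiff (differentiableAt_const v)]
  exact (hswap _ _).trans ((hsymm _ _).trans (hswap _ _).symm)

end PartialDerivative

section LinearAlgebra

variable {n : ℕ} {A B : Fin n → Fin n → ℝ}

lemma of_mul_of_eq_one (hAB : ∀ μ ν, ∑ ρ, A μ ρ * B ρ ν = if μ = ν then 1 else 0) :
    Matrix.of A * Matrix.of B = 1 := by
  ext μ ν
  simp [Matrix.mul_apply, Matrix.one_apply, hAB]

lemma sum_mul_eq_ite_comm (hAB : ∀ μ ν, ∑ ρ, A μ ρ * B ρ ν = if μ = ν then 1 else 0)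
    (μ ν : Fin n) :
    ∑ ρ, B μ ρ * A ρ ν = if μ = ν then 1 else 0 := by
  have hBA : Matrix.of B * Matrix.of A = 1 := mul_eq_one_comm.mp (of_mul_of_eq_one hAB)
  simpa [Matrix.mul_apply, Matrix.one_apply] using congr_fun (congr_fun hBA μ) ν

lemma sum_mul_sum_mul_eq_self (hAB : ∀ μ ν, ∑ ρ, A μ ρ * B ρ ν = if μ = ν then 1 else 0)
    (v : Fin n → ℝ) (σ : Fin n) :
    ∑ κ, A σ κ * ∑ ρ, B κ ρ * v ρ = v σ := by
  have h := congr_fun (Matrix.mulVec_mulVec v (Matrix.of A) (Matrix.of B)) σ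
  rwa [of_mul_of_eq_one hAB, Matrix.one_mulVec] at h

lemma eq_sum_mul_of_sum_mul_eq (hAB : ∀ μ ν, ∑ ρ, A μ ρ * B ρ ν = if μ = ν then 1 else 0)
    {x y : Fin n → ℝ} (h : ∀ σ, ∑ κ, B σ κ * x κ = y σ) (κ : Fin n) :
    x κ = ∑ σ, A κ σ * y σ := by
  rw [← sum_mul_sum_mul_eq_self hAB x κ]
  simp only [h]

end LinearAlgebra

lemma sum_mul_sum_comm {ι κ : Type*} [Fintype ι] [Fintype κ] (f : ι → ℝ) (g : κ → ℝ)
    (F : ι → κ → ℝ) :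
    ∑ i, f i * ∑ j, g j * F i j = ∑ j, g j * ∑ i, f i * F i j := by
  simp only [Finset.mul_sum]
  rw [Finset.sum_comm]
  exact Finset.sum_congr rfl fun _ _ => Finset.sum_congr rfl fun _ _ => by ring

noncomputable def christoffelFirst {n : ℕ} (G : (Fin n → ℝ) → Fin n → Fin n → ℝ)
    (q : Fin n → ℝ) (σ μ ν : Fin n) : ℝ :=
  (1 / 2) * (pd (fun p => G p σ ν) μ q + pd (fun p => G p σ μ) ν q - pd (fun p => G p μ ν) σ q)

section Christoffel

variable {n : ℕ} {G K : (Fin n → ℝ) → Fin n → Fin n → ℝ}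

lemma christoffel_eq_sum_mul_christoffelFirst (q : Fin n → ℝ) (κ μ ν : Fin n) :
    christoffel G K q κ μ ν = ∑ ρ, K q κ ρ * christoffelFirst G q ρ μ ν := by
  rw [christoffel, Finset.mul_sum]
  exact Finset.sum_congr rfl fun ρ _ => by rw [christoffelFirst]; ring

lemma sum_mul_christoffel
    (hinv : ∀ q μ ν, ∑ ρ, K q μ ρ * G q ρ ν = if μ = ν then (1 : ℝ) else 0)
    (q : Fin n → ℝ) (σ μ ν : Fin n) :
    ∑ κ, G q σ κ * christoffel G K q κ μ ν = christoffelFirst G q σ μ ν := by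
  simp only [christoffel_eq_sum_mul_christoffelFirst]
  exact sum_mul_sum_mul_eq_self (sum_mul_eq_ite_comm (hinv q)) _ σ

lemma contDiff_christoffelFirst (hG : ∀ μ ν, ContDiff ℝ 2 fun q => G q μ ν) (σ μ ν : Fin n) :
    ContDiff ℝ 1 fun q => christoffelFirst G q σ μ ν :=
  contDiff_const.mul (((contDiff_pd (hG σ ν) le_rfl μ).add (contDiff_pd (hG σ μ) le_rfl ν)).sub
    (contDiff_pd (hG μ ν) le_rfl σ))

lemma contDiff_christoffel (hG : ∀ μ ν, ContDiff ℝ 2 fun q => G q μ ν)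
    (hK : ∀ μ ν, ContDiff ℝ 1 fun q => K q μ ν) (κ μ ν : Fin n) :
    ContDiff ℝ 1 fun q => christoffel G K q κ μ ν := by
  simp only [christoffel_eq_sum_mul_christoffelFirst]
  exact ContDiff.sum fun ρ _ => (hK κ ρ).mul (contDiff_christoffelFirst hG ρ μ ν)

lemma pd_christoffelFirst (hG : ∀ μ ν, ContDiff ℝ 2 fun q => G q μ ν)
    (q : Fin n → ℝ) (σ μ ν α : Fin n) :
    pd (fun p => christoffelFirst G p σ μ ν) α q
      = (1 / 2) * (pd (pd (fun p => G p σ ν) μ) α q + pd (pd (fun p => G p σ μ) ν) α q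
          - pd (pd (fun p => G p μ ν) σ) α q) := by
  have hd : ∀ a b c, DifferentiableAt ℝ (pd (fun p => G p a b) c) q :=
    fun a b c => (contDiff_pd (hG a b) le_rfl c).differentiable one_ne_zero q
  simp only [christoffelFirst]
  rw [pd_const_mul (((hd σ ν μ).fun_add (hd σ μ ν)).fun_sub (hd μ ν σ)),
    pd_sub ((hd σ ν μ).fun_add (hd σ μ ν)) (hd μ ν σ), pd_add (hd σ ν μ) (hd σ μ ν)]

lemma sum_mul_pd_christoffel
    (hinv : ∀ q μ ν, ∑ ρ, K q μ ρ * G q ρ ν = if μ = ν then (1 : ℝ) else 0)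
    (hG : ∀ μ ν, ContDiff ℝ 2 fun q => G q μ ν) (hK : ∀ μ ν, ContDiff ℝ 1 fun q => K q μ ν)
    (q : Fin n → ℝ) (σ μ ν α : Fin n) :
    ∑ κ, G q σ κ * pd (fun p => christoffel G K p κ μ ν) α q
      = pd (fun p => christoffelFirst G p σ μ ν) α q
        - ∑ κ, pd (fun p => G p σ κ) α q * christoffel G K q κ μ ν := by
  have hGd : ∀ κ, DifferentiableAt ℝ (fun p => G p σ κ) q :=
    fun κ => (hG σ κ).differentiable two_ne_zero q
  have hΓd : ∀ κ, DifferentiableAt ℝ (fun p => christoffel G K p κ μ ν) q :=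
    fun κ => (contDiff_christoffel hG hK κ μ ν).differentiable one_ne_zero q
  have hlower : (fun p => ∑ κ, G p σ κ * christoffel G K p κ μ ν)
      = fun p => christoffelFirst G p σ μ ν :=
    funext fun p => sum_mul_christoffel hinv p σ μ ν
  rw [← hlower, pd_sum fun κ _ => (hGd κ).fun_mul (hΓd κ)]
  simp only [pd_mul (hGd _) (hΓd _), Finset.sum_add_distrib]
  ring

end Christoffel

section LieDerivative

variable {n : ℕ} {G K : (Fin n → ℝ) → Fin n → Fin n → ℝ} {ξ : (Fin n → ℝ) → Fin n → ℝ}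

lemma pd_lieG (hG : ∀ μ ν, ContDiff ℝ 2 fun q => G q μ ν) (hξ : ContDiff ℝ 2 ξ)
    (q : Fin n → ℝ) (a b c : Fin n) :
    pd (fun p => lieG ξ G p a b) c q
      = ∑ α, (pd (fun p => ξ p α) c q * pd (fun p => G p a b) α q
          + ξ q α * pd (pd (fun p => G p a b) α) c q
          + pd (pd (fun p => ξ p α) a) c q * G q α b
          + pd (fun p => ξ p α) a q * pd (fun p => G p α b) c q
          + pd (pd (fun p => ξ p α) b) c q * G q a α
          + pd (fun p => ξ p α) b q * pd (fun p => G p a α) c q) := by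
  have hξα : ∀ α, ContDiff ℝ 2 fun p => ξ p α := fun α => contDiff_pi.1 hξ α
  have hGd : ∀ μ ν, Differentiable ℝ fun p => G p μ ν :=
    fun μ ν => (hG μ ν).differentiable two_ne_zero
  have hξd : ∀ α, Differentiable ℝ fun p => ξ p α :=
    fun α => (hξα α).differentiable two_ne_zero
  have hpd : ∀ {f : (Fin n → ℝ) → ℝ}, ContDiff ℝ 2 f → ∀ α, Differentiable ℝ (pd f α) :=
    fun hf α => (contDiff_pd hf le_rfl α).differentiable one_ne_zero
  have h1 : ∀ α, DifferentiableAt ℝ (fun p => ξ p α * pd (fun p => G p a b) α p) q :=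
    fun α => (hξd α q).fun_mul (hpd (hG a b) α q)
  have h2 : ∀ α, DifferentiableAt ℝ (fun p => pd (fun p => ξ p α) a p * G p α b) q :=
    fun α => (hpd (hξα α) a q).fun_mul (hGd α b q)
  have h3 : ∀ α, DifferentiableAt ℝ (fun p => pd (fun p => ξ p α) b p * G p a α) q :=
    fun α => (hpd (hξα α) b q).fun_mul (hGd a α q)
  simp only [lieG]
  rw [pd_sum fun α _ => ((h1 α).fun_add (h2 α)).fun_add (h3 α)]
  refine Finset.sum_congr rfl fun α _ => ?_
  rw [pd_add ((h1 α).fun_add (h2 α)) (h3 α), pd_add (h1 α) (h2 α),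
    pd_mul (hξd α q) (hpd (hG a b) α q), pd_mul (hpd (hξα α) a q) (hGd α b q),
    pd_mul (hpd (hξα α) b q) (hGd a α q)]
  ring

lemma christoffelFirst_lieG (hGsymm : ∀ q μ ν, G q μ ν = G q ν μ)
    (hG : ∀ μ ν, ContDiff ℝ 2 fun q => G q μ ν) (hξ : ContDiff ℝ 2 ξ)
    (q : Fin n → ℝ) (σ μ ν : Fin n) :
    christoffelFirst (lieG ξ G) q σ μ ν
      = ∑ α, (ξ q α * pd (fun p => christoffelFirst G p σ μ ν) α q
          + pd (fun p => ξ p α) μ q * christoffelFirst G q σ α ν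
          + pd (fun p => ξ p α) ν q * christoffelFirst G q σ μ α
          + pd (fun p => ξ p α) σ q * christoffelFirst G q α μ ν
          + G q σ α * pd (pd (fun p => ξ p α) ν) μ q) := by
  have hξα : ∀ α, ContDiff ℝ 2 fun p => ξ p α := fun α => contDiff_pi.1 hξ α
  simp only [pd_christoffelFirst hG]
  simp only [christoffelFirst, pd_lieG hG hξ, ← Finset.sum_add_distrib, ← Finset.sum_sub_distrib,
    Finset.mul_sum]
  refine Finset.sum_congr rfl fun α _ => ?_
  rw [pd_comm (hG σ ν) α μ, pd_comm (hG σ μ) α ν, pd_comm (hG μ ν) α σ, pd_comm (hξα α) σ μ,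
    pd_comm (hξα α) σ ν, pd_comm (hξα α) μ ν, hGsymm q α μ]
  ring

lemma sum_mul_lieGamma_christoffel
    (hinv : ∀ q μ ν, ∑ ρ, K q μ ρ * G q ρ ν = if μ = ν then (1 : ℝ) else 0)
    (hGsymm : ∀ q μ ν, G q μ ν = G q ν μ)
    (hG : ∀ μ ν, ContDiff ℝ 2 fun q => G q μ ν) (hK : ∀ μ ν, ContDiff ℝ 1 fun q => K q μ ν)
    (hξ : ContDiff ℝ 2 ξ) (q : Fin n → ℝ) (σ μ ν : Fin n) :
    ∑ κ, G q σ κ * lieGamma ξ (christoffel G K) q κ μ ν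
      = christoffelFirst (lieG ξ G) q σ μ ν
        - ∑ ρ, lieG ξ G q σ ρ * christoffel G K q ρ μ ν := by
  have hT1 : ∑ κ, G q σ κ * ∑ ρ, ξ q ρ * pd (fun p => christoffel G K p κ μ ν) ρ q
      = ∑ ρ, ξ q ρ * (pd (fun p => christoffelFirst G p σ μ ν) ρ q
          - ∑ κ, pd (fun p => G p σ κ) ρ q * christoffel G K q κ μ ν) := by
    rw [sum_mul_sum_comm]
    simp only [sum_mul_pd_christoffel hinv hG hK]
  have hT2 : ∑ κ, G q σ κ * ∑ ρ, pd (fun p => ξ p κ) ρ q * christoffel G K q ρ μ ν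
      = ∑ κ, ∑ ρ, pd (fun p => ξ p κ) ρ q * G q σ κ * christoffel G K q ρ μ ν := by
    simp only [Finset.mul_sum, mul_left_comm (G q σ _), mul_assoc]
  have hT3 : ∑ κ, G q σ κ * ∑ ρ, pd (fun p => ξ p ρ) μ q * christoffel G K q κ ρ ν
      = ∑ ρ, pd (fun p => ξ p ρ) μ q * christoffelFirst G q σ ρ ν := by
    rw [sum_mul_sum_comm]
    simp only [sum_mul_christoffel hinv]
  have hT4 : ∑ κ, G q σ κ * ∑ ρ, pd (fun p => ξ p ρ) ν q * christoffel G K q κ μ ρ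
      = ∑ ρ, pd (fun p => ξ p ρ) ν q * christoffelFirst G q σ μ ρ := by
    rw [sum_mul_sum_comm]
    simp only [sum_mul_christoffel hinv]
  have hlieGΓ : ∑ ρ, lieG ξ G q σ ρ * christoffel G K q ρ μ ν
      = ∑ α, ξ q α * ∑ ρ, pd (fun p => G p σ ρ) α q * christoffel G K q ρ μ ν
        + ∑ α, pd (fun p => ξ p α) σ q * christoffelFirst G q α μ ν
        + ∑ α, ∑ ρ, pd (fun p => ξ p α) ρ q * G q σ α * christoffel G K q ρ μ ν := by
    simp only [lieG, Finset.sum_mul]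
    rw [Finset.sum_comm]
    simp only [← sum_mul_christoffel hinv, Finset.mul_sum, ← Finset.sum_add_distrib]
    exact Finset.sum_congr rfl fun α _ => Finset.sum_congr rfl fun ρ _ => by ring
  simp only [lieGamma, mul_add, mul_sub, Finset.sum_add_distrib, Finset.sum_sub_distrib]
  rw [hT1, hT2, hT3, hT4, hlieGΓ, christoffelFirst_lieG hGsymm hG hξ]
  simp only [mul_sub, Finset.sum_sub_distrib, Finset.sum_add_distrib]
  ring

end LieDerivative

section Conformal

variable {n : ℕ} {G K : (Fin n → ℝ) → Fin n → Fin n → ℝ} {ξ : (Fin n → ℝ) → Fin n → ℝ}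
  {τ : (Fin n → ℝ) → ℝ}

lemma christoffelFirst_mul {q : Fin n → ℝ} (hτ : DifferentiableAt ℝ τ q)
    (hG : ∀ μ ν, DifferentiableAt ℝ (fun p => G p μ ν) q) (σ μ ν : Fin n) :
    christoffelFirst (fun p μ ν => τ p * G p μ ν) q σ μ ν
      = (1 / 2) * (pd τ μ q * G q σ ν + pd τ ν q * G q σ μ - pd τ σ q * G q μ ν)
        + τ q * christoffelFirst G q σ μ ν := by
  simp only [christoffelFirst, pd_mul hτ (hG _ _)]
  ring

lemma sum_mul_lieGamma_christoffel_of_lieG_eq_mul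
    (hinv : ∀ q μ ν, ∑ ρ, K q μ ρ * G q ρ ν = if μ = ν then (1 : ℝ) else 0)
    (hGsymm : ∀ q μ ν, G q μ ν = G q ν μ)
    (hG : ∀ μ ν, ContDiff ℝ 2 fun q => G q μ ν) (hK : ∀ μ ν, ContDiff ℝ 1 fun q => K q μ ν)
    (hξ : ContDiff ℝ 2 ξ) (hlieG : ∀ q μ ν, lieG ξ G q μ ν = τ q * G q μ ν) (q : Fin n → ℝ)
    (hτ : DifferentiableAt ℝ τ q) (σ μ ν : Fin n) :
    ∑ κ, G q σ κ * lieGamma ξ (christoffel G K) q κ μ ν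
      = (1 / 2) * (pd τ μ q * G q σ ν + pd τ ν q * G q σ μ - pd τ σ q * G q μ ν) := by
  have hconf : lieG ξ G = fun p μ ν => τ p * G p μ ν := by
    funext p μ ν
    exact hlieG p μ ν
  have hτΓ : ∑ ρ, τ q * G q σ ρ * christoffel G K q ρ μ ν = τ q * christoffelFirst G q σ μ ν := by
    simp only [← sum_mul_christoffel hinv, Finset.mul_sum, mul_assoc]
  rw [sum_mul_lieGamma_christoffel hinv hGsymm hG hK hξ, hconf,
    christoffelFirst_mul hτ (fun μ ν => (hG μ ν).differentiable two_ne_zero q), hτΓ]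
  ring

end Conformal

theorem lie_derivative_of_christoffel_conformal_general (n : ℕ)
    (G K : (Fin n → ℝ) → Fin n → Fin n → ℝ)
    (hGsmooth : ∀ μ ν, ContDiff ℝ (⊤ : ℕ∞) fun q => G q μ ν)
    (hKsmooth : ∀ μ ν, ContDiff ℝ (⊤ : ℕ∞) fun q => K q μ ν)
    (hGsymm : ∀ q μ ν, G q μ ν = G q ν μ)
    (hinv : ∀ q μ ν, (∑ ρ : Fin n, K q μ ρ * G q ρ ν) = if μ = ν then (1 : ℝ) else 0)
    (ξ : (Fin n → ℝ) → Fin n → ℝ) (τ : (Fin n → ℝ) → ℝ)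
    (hξsmooth : ContDiff ℝ (⊤ : ℕ∞) ξ)
    (hτsmooth : ContDiff ℝ (⊤ : ℕ∞) τ)
    (hlieG : ∀ q μ ν, lieG ξ G q μ ν = τ q * G q μ ν) :
    ∀ q κ μ ν, lieGamma ξ (christoffel G K) q κ μ ν
      = (1 / 2) * (pd τ μ q * (if κ = ν then (1 : ℝ) else 0)
          + pd τ ν q * (if κ = μ then (1 : ℝ) else 0)
          - (∑ ρ : Fin n, K q κ ρ * pd τ ρ q) * G q μ ν) := by
  intro q κ μ ν
  have hlowered := sum_mul_lieGamma_christoffel_of_lieG_eq_mul hinv hGsymm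
    (fun μ ν => (hGsmooth μ ν).of_le ENat.LEInfty.out)
    (fun μ ν => (hKsmooth μ ν).of_le ENat.LEInfty.out) (hξsmooth.of_le ENat.LEInfty.out) hlieG q
    (hτsmooth.differentiable (by simp) q)
  rw [eq_sum_mul_of_sum_mul_eq (hinv q) (fun σ => hlowered σ μ ν) κ, ← hinv q κ ν, ← hinv q κ μ]
  simp only [Finset.mul_sum, Finset.sum_mul, ← Finset.sum_add_distrib, ← Finset.sum_sub_distrib]
  exact Finset.sum_congr rfl fun _ _ => by ring

/-- if `£_ξ G = τ·G` then
`£_ξ Γ^κ_{μν} = (1/2)(τ_{,μ} δ^κ_ν + τ_{,ν} δ^κ_μ − τ^{,κ} G_{μν})`. -/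
theorem lie_derivative_of_christoffel_conformal (n : ℕ) (hn : 1 ≤ n)
    (G K : (Fin n → ℝ) → Fin n → Fin n → ℝ)
    (hGsmooth : ∀ μ ν, ContDiff ℝ (⊤ : ℕ∞) fun q => G q μ ν)
    (hKsmooth : ∀ μ ν, ContDiff ℝ (⊤ : ℕ∞) fun q => K q μ ν)
    (hGsymm : ∀ q μ ν, G q μ ν = G q ν μ)
    (hKsymm : ∀ q μ ν, K q μ ν = K q ν μ)
    (hinv : ∀ q μ ν, (∑ ρ : Fin n, K q μ ρ * G q ρ ν) = if μ = ν then (1 : ℝ) else 0)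
    (ξ : (Fin n → ℝ) → Fin n → ℝ) (τ : (Fin n → ℝ) → ℝ)
    (hξsmooth : ContDiff ℝ (⊤ : ℕ∞) ξ)
    (hτsmooth : ContDiff ℝ (⊤ : ℕ∞) τ)
    (hlieG : ∀ q μ ν, lieG ξ G q μ ν = τ q * G q μ ν) :
    ∀ q κ μ ν, lieGamma ξ (christoffel G K) q κ μ ν
      = (1 / 2) * (pd τ μ q * (if κ = ν then (1 : ℝ) else 0)
          + pd τ ν q * (if κ = μ then (1 : ℝ) else 0)
          - (∑ ρ : Fin n, K q κ ρ * pd τ ρ q) * G q μ ν) :=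
  lie_derivative_of_christoffel_conformal_general n G K hGsmooth hKsmooth hGsymm hinv ξ τ hξsmooth
    hτsmooth hlieG
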